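/- arXiv:2007.12035 — 2 statements merged into one kernel-verified Lean document; each statement's English description precedes it below -/
import Mathlib

section
/- For every equality pattern μ on 2k-tuples (given by a partition of [2k]) and every k-tuple v̄ over [n], there exists a permutation π of [k] such that the permuted pattern π⋆μ is 'good' — meaning for every used constant class I_s of π⋆μ, if i is the smallest index with k+i ∈ I_s then also i ∈ I_s — and the set P̃_{μ,v̄} of tuples satisfying conditions (a),(b),(c) relative to (μ, v̄) equals P̃_{π⋆μ, π⋆v̄}. -/
attribute [local instance] Classical.propDecidable

/-- `x` lies in a constant class (a class whose minimum element is in the first half). -/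
def IsConstantElem (k : ℕ) (P : Setoid (Fin (k + k))) (x : Fin (k + k)) : Prop :=
  ∃ j : Fin k, P.r x (Fin.castAdd k j)

/-- `x` lies in a used constant class (constant and containing an element of the
second half). -/
def IsUsedConstantElem (k : ℕ) (P : Setoid (Fin (k + k))) (x : Fin (k + k)) : Prop :=
  IsConstantElem k P x ∧ ∃ j : Fin k, P.r x (Fin.natAdd k j)

/-- `x` lies in a variable class. -/
def IsVariableElem (k : ℕ) (P : Setoid (Fin (k + k))) (x : Fin (k + k)) : Prop :=
  ¬ IsConstantElem k P x

/-- The representative of the class of `x`: its minimum element. -/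
noncomputable def rep (k : ℕ) (P : Setoid (Fin (k + k))) (x : Fin (k + k)) :
    Fin (k + k) :=
  (Finset.univ.filter (fun y => P.r x y)).min'
    ⟨x, Finset.mem_filter.mpr ⟨Finset.mem_univ x, P.refl x⟩⟩

/-- Condition (a). -/
def CondA (n k : ℕ) (P : Setoid (Fin (k + k))) (v' : Fin k → Fin n) : Prop :=
  ∀ i j : Fin k,
    (IsVariableElem k P (Fin.natAdd k i) ∨ IsUsedConstantElem k P (Fin.natAdd k i)) →
    P.r (Fin.natAdd k i) (Fin.natAdd k j) → v' i = v' j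

/-- Condition (b). -/
def CondB (n k : ℕ) (P : Setoid (Fin (k + k))) (v' : Fin k → Fin n) : Prop :=
  ∀ i j : Fin k,
    (IsVariableElem k P (Fin.natAdd k i) ∨ IsUsedConstantElem k P (Fin.natAdd k i)) →
    (IsVariableElem k P (Fin.natAdd k j) ∨ IsUsedConstantElem k P (Fin.natAdd k j)) →
    ¬ P.r (Fin.natAdd k i) (Fin.natAdd k j) → v' i ≠ v' j

/-- Condition (c). -/
def CondC (n k : ℕ) (P : Setoid (Fin (k + k))) (vb v' : Fin k → Fin n) : Prop :=
  ∀ i : Fin k, IsUsedConstantElem k P (Fin.natAdd k i) →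
    ∀ j : Fin k, rep k P (Fin.natAdd k i) = Fin.castAdd k j → v' i = vb j

/-- Condition (d). -/
def CondD (n k : ℕ) (P : Setoid (Fin (k + k))) (vb v' : Fin k → Fin n) : Prop :=
  ∀ i : Fin k, IsVariableElem k P (Fin.natAdd k i) →
    ∀ x : Fin (k + k), IsConstantElem k P x → ¬ IsUsedConstantElem k P x →
      ∀ j : Fin k, rep k P x = Fin.castAdd k j → v' i ≠ vb j

/-- Tuples satisfying conditions (a), (b), (c) relative to the pattern `P` and `vb`. -/
def Ptil (n k : ℕ) (P : Setoid (Fin (k + k))) (vb : Fin k → Fin n) :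
    Set (Fin k → Fin n) :=
  {v' | CondA n k P v' ∧ CondB n k P v' ∧ CondC n k P vb v'}

/-- Extend a permutation of the first `k` indices to `[2k]`, fixing the second half. -/
def extPerm (k : ℕ) (π : Equiv.Perm (Fin k)) : Equiv.Perm (Fin (k + k)) :=
  finSumFinEquiv.symm.trans ((Equiv.sumCongr π (Equiv.refl (Fin k))).trans finSumFinEquiv)

/-- The permuted pattern `π⋆μ`: its classes are the images under `extPerm π` of the
classes of `P`. -/
def starPattern (k : ℕ) (π : Equiv.Perm (Fin k)) (P : Setoid (Fin (k + k))) :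
    Setoid (Fin (k + k)) :=
  Setoid.comap (⇑(extPerm k π).symm) P

/-- A pattern is good if for every used constant class, the smallest index `i`
with `k + i` in the class also satisfies `i` in the class. -/
def GoodPattern (k : ℕ) (P : Setoid (Fin (k + k))) : Prop :=
  ∀ i : Fin k, IsUsedConstantElem k P (Fin.natAdd k i) →
    (∀ j : Fin k, P.r (Fin.natAdd k i) (Fin.natAdd k j) → i ≤ j) →
    P.r (Fin.natAdd k i) (Fin.castAdd k i)

/-!
Conditions (a) and (b) only see the second half of the pattern, which `π⋆μ` leaves alone, so
they hold for `π⋆μ` exactly when they hold for `μ`. For a used constant class with first-half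
part `S` and least second-half index `ℓ`, goodness of `π⋆μ` asks for `ℓ ∈ π(S)`, and condition
(c) is unchanged as soon as `π` sends `min S` to `min π(S)`. Such a `π` exists because the sets
`S` are disjoint and the indices `ℓ` distinct: first send each `min S` to its `ℓ`, then
precompose, inside each `S`, with the transposition of `min S` and the point sent lowest.
-/

open Function Finset

theorem Equiv.mapsTo_swap {α : Type*} [DecidableEq α] {s : Set α} {a b : α} (ha : a ∈ s)
    (hb : b ∈ s) : Set.MapsTo (Equiv.swap a b) s s := fun x hx => by
  rw [Equiv.swap_apply_def]
  split_ifs <;> assumption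

theorem exists_perm_eqOn_of_pairwise_disjoint {α ι : Type*} [Finite ι]
    {S : ι → Finset α} (hS : Pairwise (Disjoint on S)) (τ : ι → Equiv.Perm α)
    (hτ : ∀ t, Set.MapsTo (τ t) (S t) (S t)) :
    ∃ π : Equiv.Perm α, ∀ t, ∀ x ∈ S t, π x = τ t x := by
  have hval : Injective fun x : Σ t, S t => (x.2 : α) := by
    rintro ⟨t, s⟩ ⟨t', s'⟩ (h : (s : α) = s')
    obtain rfl := hS.eq (not_disjoint_iff.2 ⟨s, s.2, h ▸ s'.2⟩)
    obtain rfl := Subtype.ext h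
    rfl
  have hτval : Injective fun x : Σ t, S t => τ x.1 x.2 := by
    rintro ⟨t, s⟩ ⟨t', s'⟩ (h : τ t s = τ t' s')
    obtain rfl := hS.eq (not_disjoint_iff.2 ⟨_, hτ t s.2, h ▸ hτ t' s'.2⟩)
    obtain rfl := Subtype.ext ((τ t).injective h)
    rfl
  obtain ⟨π, hπ⟩ := Equiv.Perm.exists_extending_pair _ _ hval hτval
  exact ⟨π, fun t x hx => hπ ⟨t, x, hx⟩⟩

theorem exists_perm_apply_eq_and_apply_min'_le {α ι : Type*} [LinearOrder α] [Finite ι]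
    {S : ι → Finset α} {ℓ : ι → α} (hS : Pairwise (Disjoint on S))
    (hne : ∀ t, (S t).Nonempty) (hℓ : ℓ.Injective) :
    ∃ π : Equiv.Perm α, ∀ t, (∃ s ∈ S t, π s = ℓ t) ∧
      ∀ s ∈ S t, π ((S t).min' (hne t)) ≤ π s := by
  set m := fun t => (S t).min' (hne t)
  have hm : ∀ t, m t ∈ S t := fun t => min'_mem _ _
  obtain ⟨σ, hσ⟩ := Equiv.Perm.exists_extending_pair m ℓ
    (fun t t' h => hS.eq (not_disjoint_iff.2 ⟨m t, hm t, h ▸ hm t'⟩)) hℓ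
  choose a ha hσa using fun t => (S t).exists_min_image σ (hne t)
  obtain ⟨τ, hτ⟩ := exists_perm_eqOn_of_pairwise_disjoint hS
    (fun t => Equiv.swap (m t) (a t)) (fun t => Equiv.mapsTo_swap (hm t) (ha t))
  refine ⟨σ * τ, fun t => ⟨⟨a t, ha t, ?_⟩, fun s hs => ?_⟩⟩
  · rw [Equiv.Perm.mul_apply, hτ t _ (ha t), Equiv.swap_apply_right, hσ]
  · rw [Equiv.Perm.mul_apply, Equiv.Perm.mul_apply, hτ t _ (hm t), hτ t s hs,
      Equiv.swap_apply_left]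
    exact hσa t _ (Equiv.mapsTo_swap (hm t) (ha t) hs)

section Pattern

variable {n k : ℕ} (π : Equiv.Perm (Fin k)) (P : Setoid (Fin (k + k)))

theorem extPerm_castAdd (j : Fin k) : extPerm k π (Fin.castAdd k j) = Fin.castAdd k (π j) := by
  simp only [extPerm, Equiv.trans_apply, finSumFinEquiv_symm_apply_castAdd, Equiv.sumCongr_apply,
    Sum.map_inl, finSumFinEquiv_apply_left]

theorem extPerm_natAdd (j : Fin k) : extPerm k π (Fin.natAdd k j) = Fin.natAdd k j := by
  simp only [extPerm, Equiv.trans_apply, finSumFinEquiv_symm_apply_natAdd, Equiv.sumCongr_apply,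
    Sum.map_inr, Equiv.refl_apply, finSumFinEquiv_apply_right]

theorem extPerm_symm_castAdd (j : Fin k) :
    (extPerm k π).symm (Fin.castAdd k j) = Fin.castAdd k (π.symm j) := by
  rw [Equiv.symm_apply_eq, extPerm_castAdd, Equiv.apply_symm_apply]

theorem extPerm_symm_natAdd (j : Fin k) :
    (extPerm k π).symm (Fin.natAdd k j) = Fin.natAdd k j := by
  rw [Equiv.symm_apply_eq, extPerm_natAdd]

theorem starPattern_r {x y : Fin (k + k)} :
    (starPattern k π P).r x y ↔ P.r ((extPerm k π).symm x) ((extPerm k π).symm y) :=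
  Iff.rfl

theorem isConstantElem_starPattern_natAdd (i : Fin k) :
    IsConstantElem k (starPattern k π P) (Fin.natAdd k i) ↔
      IsConstantElem k P (Fin.natAdd k i) := by
  simp only [IsConstantElem, starPattern_r, extPerm_symm_natAdd, extPerm_symm_castAdd]
  exact (π.exists_congr_left (p := fun j => P.r (Fin.natAdd k i) (Fin.castAdd k j))).symm

theorem isUsedConstantElem_starPattern_natAdd (i : Fin k) :
    IsUsedConstantElem k (starPattern k π P) (Fin.natAdd k i) ↔
      IsUsedConstantElem k P (Fin.natAdd k i) := by
  simp only [IsUsedConstantElem, isConstantElem_starPattern_natAdd, starPattern_r,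
    extPerm_symm_natAdd]

theorem isVariableElem_starPattern_natAdd (i : Fin k) :
    IsVariableElem k (starPattern k π P) (Fin.natAdd k i) ↔
      IsVariableElem k P (Fin.natAdd k i) := by
  simp only [IsVariableElem, isConstantElem_starPattern_natAdd]

theorem condA_starPattern_iff (v' : Fin k → Fin n) :
    CondA n k (starPattern k π P) v' ↔ CondA n k P v' := by
  simp only [CondA, isVariableElem_starPattern_natAdd, isUsedConstantElem_starPattern_natAdd,
    starPattern_r, extPerm_symm_natAdd]

theorem condB_starPattern_iff (v' : Fin k → Fin n) :
    CondB n k (starPattern k π P) v' ↔ CondB n k P v' := by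
  simp only [CondB, isVariableElem_starPattern_natAdd, isUsedConstantElem_starPattern_natAdd,
    starPattern_r, extPerm_symm_natAdd]

theorem condC_starPattern_iff
    (hrep : ∀ i, IsUsedConstantElem k P (Fin.natAdd k i) →
      rep k (starPattern k π P) (Fin.natAdd k i) = extPerm k π (rep k P (Fin.natAdd k i)))
    (vb v' : Fin k → Fin n) :
    CondC n k (starPattern k π P) (fun i => vb (π.symm i)) v' ↔ CondC n k P vb v' := by
  refine forall_congr' fun i => ?_
  rw [isUsedConstantElem_starPattern_natAdd]
  refine imp_congr_right fun hi => ?_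
  rw [hrep i hi, π.symm.forall_congr_left]
  simp only [Equiv.symm_symm, Equiv.symm_apply_apply, ← extPerm_castAdd,
    (extPerm k π).apply_eq_iff_eq]

noncomputable def firstHalfClass (k : ℕ) (P : Setoid (Fin (k + k))) (x : Fin (k + k)) :
    Finset (Fin k) :=
  univ.filter fun s => P.r x (Fin.castAdd k s)

def IsLeader (k : ℕ) (P : Setoid (Fin (k + k))) (i : Fin k) : Prop :=
  IsUsedConstantElem k P (Fin.natAdd k i) ∧
    ∀ j : Fin k, P.r (Fin.natAdd k i) (Fin.natAdd k j) → i ≤ j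

variable {P}

theorem mem_firstHalfClass {x : Fin (k + k)} {s : Fin k} :
    s ∈ firstHalfClass k P x ↔ P.r x (Fin.castAdd k s) := by
  simp [firstHalfClass]

theorem firstHalfClass_nonempty {x : Fin (k + k)} (hx : IsConstantElem k P x) :
    (firstHalfClass k P x).Nonempty :=
  let ⟨j, hj⟩ := hx
  ⟨j, mem_firstHalfClass.mpr hj⟩

theorem firstHalfClass_eq_of_r {x y : Fin (k + k)} (h : P.r x y) :
    firstHalfClass k P x = firstHalfClass k P y := by
  ext s
  simp only [mem_firstHalfClass]
  exact ⟨P.trans (P.symm h), P.trans h⟩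

theorem firstHalfClass_starPattern_natAdd (i : Fin k) :
    firstHalfClass k (starPattern k π P) (Fin.natAdd k i) =
      (firstHalfClass k P (Fin.natAdd k i)).map π.toEmbedding := by
  ext s
  simp only [mem_map_equiv, mem_firstHalfClass, starPattern_r, extPerm_symm_natAdd,
    extPerm_symm_castAdd]

theorem rep_eq_castAdd_of_isLeast {x : Fin (k + k)} {m : Fin k}
    (h : IsLeast (firstHalfClass k P x : Set (Fin k)) m) : rep k P x = Fin.castAdd k m := by
  obtain ⟨hm, hle⟩ := h
  rw [Finset.mem_coe, mem_firstHalfClass] at hm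
  refine le_antisymm (min'_le _ _ (by simpa using hm)) (le_min' _ _ _ fun y hy => ?_)
  rw [mem_filter] at hy
  induction y using Fin.addCases with
  | left j =>
    have : m ≤ j := hle (Finset.mem_coe.mpr (mem_firstHalfClass.mpr hy.2))
    rwa [Fin.le_def, Fin.val_castAdd, Fin.val_castAdd]
  | right j =>
    rw [Fin.le_def, Fin.val_castAdd, Fin.val_natAdd]
    omega

theorem rep_starPattern_natAdd {i m : Fin k}
    (hm : IsLeast (firstHalfClass k P (Fin.natAdd k i) : Set (Fin k)) m)
    (hπm : ∀ s ∈ firstHalfClass k P (Fin.natAdd k i), π m ≤ π s) :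
    rep k (starPattern k π P) (Fin.natAdd k i) = extPerm k π (rep k P (Fin.natAdd k i)) := by
  rw [rep_eq_castAdd_of_isLeast hm, extPerm_castAdd]
  refine rep_eq_castAdd_of_isLeast ⟨?_, ?_⟩
  · rw [firstHalfClass_starPattern_natAdd, coe_map]
    exact Set.mem_image_of_mem π hm.1
  · rw [firstHalfClass_starPattern_natAdd, coe_map]
    rintro _ ⟨s, hs, rfl⟩
    exact hπm s hs

theorem exists_isLeader {i : Fin k} (hi : IsUsedConstantElem k P (Fin.natAdd k i)) :
    ∃ t, IsLeader k P t ∧ P.r (Fin.natAdd k i) (Fin.natAdd k t) := by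
  set C := univ.filter fun j => P.r (Fin.natAdd k i) (Fin.natAdd k j)
  obtain ⟨t, ht, hmin⟩ := C.exists_min_image id ⟨i, mem_filter.mpr ⟨mem_univ _, P.refl _⟩⟩
  have hit : P.r (Fin.natAdd k i) (Fin.natAdd k t) := (mem_filter.mp ht).2
  obtain ⟨⟨j, hj⟩, -⟩ := hi
  refine ⟨t, ⟨⟨⟨j, P.trans (P.symm hit) hj⟩, i, P.symm hit⟩, fun j' hj' => ?_⟩, hit⟩
  exact hmin j' (mem_filter.mpr ⟨mem_univ _, P.trans hit hj'⟩)

theorem disjoint_firstHalfClass_of_isLeader {t t' : Fin k} (ht : IsLeader k P t)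
    (ht' : IsLeader k P t') (hne : t ≠ t') :
    Disjoint (firstHalfClass k P (Fin.natAdd k t)) (firstHalfClass k P (Fin.natAdd k t')) := by
  refine disjoint_left.mpr fun s hs hs' => hne ?_
  have h : P.r (Fin.natAdd k t) (Fin.natAdd k t') :=
    P.trans (mem_firstHalfClass.mp hs) (P.symm (mem_firstHalfClass.mp hs'))
  exact le_antisymm (ht.2 _ h) (ht'.2 _ (P.symm h))

theorem goodPattern_starPattern
    (h : ∀ t, IsLeader k P t → π.symm t ∈ firstHalfClass k P (Fin.natAdd k t)) :
    GoodPattern k (starPattern k π P) := by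
  intro i hi hmin
  simp only [isUsedConstantElem_starPattern_natAdd, starPattern_r, extPerm_symm_natAdd,
    extPerm_symm_castAdd] at hi hmin ⊢
  exact mem_firstHalfClass.mp (h i ⟨hi, hmin⟩)

end Pattern

theorem exists_good_permuted_pattern (n k : ℕ) (P : Setoid (Fin (k + k)))
    (vb : Fin k → Fin n) :
    ∃ π : Equiv.Perm (Fin k),
      GoodPattern k (starPattern k π P) ∧
      Ptil n k P vb = Ptil n k (starPattern k π P) (fun i => vb (π.symm i)) := by
  obtain ⟨π, hπ⟩ := exists_perm_apply_eq_and_apply_min'_le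
    (S := fun t : {t // IsLeader k P t} => firstHalfClass k P (Fin.natAdd k t))
    (fun t t' h => disjoint_firstHalfClass_of_isLeader t.2 t'.2 (Subtype.coe_ne_coe.mpr h))
    (fun t => firstHalfClass_nonempty t.2.1.1) Subtype.val_injective
  refine ⟨π, goodPattern_starPattern π fun t ht => ?_, ?_⟩
  · obtain ⟨s, hs, rfl⟩ := (hπ ⟨t, ht⟩).1
    rwa [Equiv.symm_apply_apply]
  have hrep : ∀ i, IsUsedConstantElem k P (Fin.natAdd k i) →
      rep k (starPattern k π P) (Fin.natAdd k i) = extPerm k π (rep k P (Fin.natAdd k i)) := by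
    intro i hi
    obtain ⟨t, ht, hit⟩ := exists_isLeader hi
    have hS := firstHalfClass_eq_of_r hit
    exact rep_starPattern_natAdd π
      (m := (firstHalfClass k P (Fin.natAdd k t)).min' (firstHalfClass_nonempty ht.1.1))
      (by rw [hS]; exact isLeast_min' _ _) (by rw [hS]; exact (hπ ⟨t, ht⟩).2)
  ext v'
  exact and_congr (condA_starPattern_iff π P v').symm
    (and_congr (condB_starPattern_iff π P v').symm (condC_starPattern_iff π P hrep vb v').symm)
end

section
/- Suppose two multisets of colours M_G = {χ_G(v') : v' ∈ τ} and M_H = {χ_H(w') : w' ∈ τ}, indexed by an equality pattern τ of k-tuples, arise from colourings with the property that χ_G(v') = χ_H(w') implies v' ~ w'. If the total multisets over all k-tuples are equal, i.e., {χ_G(v') : v' ∈ (Fin n)^k} = {χ_H(w') : w' ∈ (Fin n)^k} as multisets, then M_G = M_H for every pattern τ. -/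
attribute [local instance] Classical.propDecidable

/-- The equality-pattern setoid on `k`-tuples over `Fin n`. -/
def patternSetoid (n k : ℕ) : Setoid (Fin k → Fin n) where
  r v v' := ∀ i j : Fin k, v i = v j ↔ v' i = v' j
  iseqv := ⟨fun _ _ _ => Iff.rfl, fun h i j => (h i j).symm,
    fun h h' i j => (h i j).trans (h' i j)⟩

theorem total_multiset_eq_implies_per_pattern (n k : ℕ) (C : Type*)
    (χG χH : (Fin k → Fin n) → C)
    (hpat : ∀ v' w' : Fin k → Fin n, χG v' = χH w' →
      ∀ i j : Fin k, v' i = v' j ↔ w' i = w' j)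
    (hmul : Finset.univ.val.map χG = Finset.univ.val.map χH) :
    ∀ τ : Quotient (patternSetoid n k),
      (Finset.univ.val.filter
        (fun v' : Fin k → Fin n => Quotient.mk (patternSetoid n k) v' = τ)).map χG =
      (Finset.univ.val.filter
        (fun w' : Fin k → Fin n => Quotient.mk (patternSetoid n k) w' = τ)).map χH := by
  intro τ
  set p : C → Prop := fun c => ∃ w', χH w' = c ∧ Quotient.mk (patternSetoid n k) w' = τ with hp
  have hG : ∀ v' : Fin k → Fin n,
      (Quotient.mk (patternSetoid n k) v' = τ) ↔ p (χG v') := by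
    intro v'
    constructor
    · intro h
      obtain ⟨w', hw⟩ : ∃ w', χH w' = χG v' := by
        have : χG v' ∈ Finset.univ.val.map χH := by
          rw [← hmul]; exact Multiset.mem_map_of_mem _ (Finset.mem_univ v')
        simpa using this
      refine ⟨w', hw, ?_⟩
      rw [← h]
      exact Quotient.sound (fun i j => ((hpat v' w' hw.symm) i j).symm)
    · rintro ⟨w', hw, hτ⟩
      rw [← hτ]
      exact Quotient.sound (fun i j => (hpat v' w' hw.symm) i j)
  have hH : ∀ w' : Fin k → Fin n,
      (Quotient.mk (patternSetoid n k) w' = τ) ↔ p (χH w') := by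
    intro w'
    constructor
    · intro h; exact ⟨w', rfl, h⟩
    · rintro ⟨w'', hw, hτ⟩
      obtain ⟨v', hv⟩ : ∃ v', χG v' = χH w' := by
        have : χH w' ∈ Finset.univ.val.map χG := by
          rw [hmul]; exact Multiset.mem_map_of_mem _ (Finset.mem_univ w')
        simpa using this
      have h1 := hpat v' w' hv
      have h2 := hpat v' w'' (hv.trans hw.symm)
      rw [← hτ]
      exact Quotient.sound (fun i j => ((h1 i j).symm.trans (h2 i j)))
  calc (Finset.univ.val.filter
        (fun v' : Fin k → Fin n => Quotient.mk (patternSetoid n k) v' = τ)).map χG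
      = (Finset.univ.val.filter (p ∘ χG)).map χG := by
        congr 1; exact Multiset.filter_congr (fun x _ => by simpa using hG x)
    _ = (Finset.univ.val.map χG).filter p := (Multiset.filter_map p χG _).symm
    _ = (Finset.univ.val.map χH).filter p := by rw [hmul]
    _ = (Finset.univ.val.filter (p ∘ χH)).map χH := Multiset.filter_map p χH _
    _ = (Finset.univ.val.filter
        (fun w' : Fin k → Fin n => Quotient.mk (patternSetoid n k) w' = τ)).map χH := by
        congr 1; exact Multiset.filter_congr (fun x _ => by simpa using (hH x).symm)
end
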